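/- Let 0 < p < 1 be a probability and n, m positive integers. Then the expected size of the minimization satisfies E[|min(B_{n,m,p})|] ≤ Σ_{i=0}^{n} C(n,i) · (1 - (1 - p^i·(1-p)^{n-i})^m) · (1 - (1-p)^{n-i}·(1-p^i))^{m-1}. -/

import Mathlib

open MeasureTheory

/-- The Bernoulli(p) measure on `Bool`. -/
noncomputable def bernoulliBool (p : ℝ) : Measure Bool :=
  ENNReal.ofReal p • Measure.dirac true + ENNReal.ofReal (1 - p) • Measure.dirac false

instance (p : ℝ) : IsFiniteMeasure (bernoulliBool p) := by
  constructor
  rw [bernoulliBool]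
  simp [ENNReal.add_lt_top]

/-- The law of `m` i.i.d. random subsets of `{1,…,n}` (encoded as indicator vectors),
each element included independently with probability `p`. -/
noncomputable def hyperMeasure (n m : ℕ) (p : ℝ) : Measure (Fin m → Fin n → Bool) :=
  Measure.pi fun _ : Fin m => Measure.pi fun _ : Fin n => bernoulliBool p

/-- The subset of `Fin n` encoded by an indicator vector. -/
def toSet {n : ℕ} (f : Fin n → Bool) : Finset (Fin n) :=
  Finset.univ.filter fun i => f i = true

/-- The number of distinct minimal edges of the sampled multi-hypergraph:
sets `S` that occur among the samples and such that no sample is a proper subset of `S`. -/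
def minCount (n m : ℕ) (ω : Fin m → Fin n → Bool) : ℕ :=
  (Finset.univ.filter fun S : Finset (Fin n) =>
    (∃ j, toSet (ω j) = S) ∧ ∀ k, ¬ toSet (ω k) ⊂ S).card

/-- Expected size of the minimization of `B_{n,m,p}`. -/
noncomputable def expMin (n m : ℕ) (p : ℝ) : ℝ :=
  ∫ ω, (minCount n m ω : ℝ) ∂(hyperMeasure n m p)

/-!
By linearity of expectation, `E[|min|]` is the sum over `S ⊆ [n]` of the probability that
`S` is a minimal edge, i.e. that every sample avoids the proper subsets of `S` and some sample
equals `S`. For `|S| = i` a single sample equals `S` with probability `q = p^i (1-p)^(n-i)` and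
is not a proper subset of `S` with probability `r = 1 - (1-p)^(n-i) (1-p^i)`, so `S` is minimal
with probability `r^m - (r-q)^m`. Expanding both sides as geometric sums and using
`r - q ≤ r (1-q)` termwise gives `r^m - (r-q)^m ≤ (1 - (1-q)^m) r^(m-1)`; summing over the
`C(n,i)` sets of each size `i` yields the bound.
-/

open Finset

theorem pow_sub_sub_pow_le {q r : ℝ} (hq : 0 ≤ q) (hqr : q ≤ r) (hr : r ≤ 1) (m : ℕ) :
    r ^ m - (r - q) ^ m ≤ (1 - (1 - q) ^ m) * r ^ (m - 1) := by
  have hr0 : 0 ≤ r := hq.trans hqr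
  have hterm : ∀ i ∈ range m,
      r ^ i * (r - q) ^ (m - 1 - i) ≤ r ^ (m - 1) * (1 - q) ^ (m - 1 - i) := by
    intro i hi
    calc r ^ i * (r - q) ^ (m - 1 - i) ≤ r ^ i * (r * (1 - q)) ^ (m - 1 - i) := by
          gcongr
          nlinarith [mul_nonneg hq (sub_nonneg.2 hr)]
      _ = r ^ (m - 1) * (1 - q) ^ (m - 1 - i) := by
          rw [mul_pow, ← mul_assoc, ← pow_add, Nat.add_sub_of_le (by grind)]
  calc r ^ m - (r - q) ^ m = (∑ i ∈ range m, r ^ i * (r - q) ^ (m - 1 - i)) * q := by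
        simpa using (geom_sum₂_mul r (r - q) m).symm
    _ ≤ (∑ i ∈ range m, r ^ (m - 1) * (1 - q) ^ (m - 1 - i)) * q := by
        gcongr ?_ * _
        exact sum_le_sum hterm
    _ = (1 - (1 - q) ^ m) * r ^ (m - 1) := by
        have := geom_sum₂_mul (1 : ℝ) (1 - q) m
        simp only [one_pow, one_mul, sub_sub_cancel] at this
        rw [← mul_sum, ← this]
        ring

theorem measureReal_pi_univ_pi {ι : Type*} [Fintype ι] {α : ι → Type*}
    [∀ i, MeasurableSpace (α i)] (μ : ∀ i, Measure (α i)) [∀ i, IsFiniteMeasure (μ i)]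
    (s : ∀ i, Set (α i)) :
    (Measure.pi μ).real (Set.univ.pi s) = ∏ i, (μ i).real (s i) := by
  simp only [measureReal_def, Measure.pi_pi, ENNReal.toReal_prod]

theorem measureReal_pi_univ_pi_ite {ι α : Type*} [Fintype ι] [DecidableEq ι]
    [MeasurableSpace α] (μ : Measure α) [IsFiniteMeasure μ] (S : Finset ι) (u v : Set α) :
    (Measure.pi fun _ : ι => μ).real (Set.univ.pi fun i => if i ∈ S then u else v) =
      μ.real u ^ #S * μ.real v ^ (Fintype.card ι - #S) := by
  rw [measureReal_pi_univ_pi]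
  simp [apply_ite, prod_ite, filter_notMem_eq_sdiff, card_sdiff]

theorem measureReal_pi_exists_mem_and_forall_mem {ι α : Type*} [Fintype ι] [MeasurableSpace α]
    (μ : Measure α) [IsFiniteMeasure μ] {A B : Set α} (hA : MeasurableSet A)
    (hB : MeasurableSet B) :
    (Measure.pi fun _ : ι => μ).real {ω | (∃ j, ω j ∈ B) ∧ ∀ k, ω k ∈ A} =
      μ.real A ^ Fintype.card ι - μ.real (A \ B) ^ Fintype.card ι := by
  have hset : {ω : ι → α | (∃ j, ω j ∈ B) ∧ ∀ k, ω k ∈ A} =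
      Set.univ.pi (fun _ => A) \ Set.univ.pi (fun _ => A \ B) := by
    ext ω
    simp only [Set.mem_ofPred_eq, Set.mem_sdiff, Set.mem_univ_pi, not_forall, not_and, not_not]
    grind
  rw [hset, measureReal_sdiff (Set.pi_mono fun _ _ => Set.sdiff_subset)
      (MeasurableSet.univ_pi fun _ => hA.diff hB),
    measureReal_pi_univ_pi, measureReal_pi_univ_pi, prod_const, prod_const, card_univ]

theorem isProbabilityMeasure_bernoulliBool {p : ℝ} (hp0 : 0 ≤ p) (hp1 : p ≤ 1) :
    IsProbabilityMeasure (bernoulliBool p) := by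
  constructor
  simp [bernoulliBool, ← ENNReal.ofReal_add hp0 (sub_nonneg.2 hp1)]

theorem bernoulliBool_real_singleton {p : ℝ} (hp0 : 0 ≤ p) (hp1 : p ≤ 1) (b : Bool) :
    (bernoulliBool p).real {b} = if b then p else 1 - p := by
  cases b <;> simp [bernoulliBool, measureReal_def, hp0, hp1]

theorem setOf_toSet_subset {n : ℕ} (S : Finset (Fin n)) :
    {f : Fin n → Bool | toSet f ⊆ S} =
      Set.univ.pi fun i => if i ∈ S then Set.univ else {false} := by
  ext f
  simp only [toSet, Set.mem_ofPred_eq, Set.mem_univ_pi, subset_iff, mem_filter, mem_univ,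
    true_and]
  grind

theorem setOf_toSet_eq {n : ℕ} (S : Finset (Fin n)) :
    {f : Fin n → Bool | toSet f = S} =
      Set.univ.pi fun i => if i ∈ S then {true} else {false} := by
  ext f
  simp only [toSet, Set.mem_ofPred_eq, Set.mem_univ_pi, Finset.ext_iff, mem_filter, mem_univ,
    true_and]
  grind

theorem integral_card_filter {Ω ι : Type*} [MeasurableSpace Ω] [Fintype ι] (μ : Measure Ω)
    [IsFiniteMeasure μ] (P : ι → Ω → Prop) [∀ i ω, Decidable (P i ω)]
    (hP : ∀ i, MeasurableSet {ω | P i ω}) :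
    ∫ ω, (#{i | P i ω} : ℝ) ∂μ = ∑ i, μ.real {ω | P i ω} := by
  have hcard (ω : Ω) : (#{i | P i ω} : ℝ) = ∑ i, {ω | P i ω}.indicator 1 ω := by
    simp [Set.indicator_apply]
  simp_rw [hcard]
  rw [integral_finsetSum _ fun i _ => (integrable_const 1).indicator (hP i)]
  simp_rw [integral_indicator_one (hP _)]

section BernoulliVector

variable {n : ℕ} {p : ℝ}

theorem measureReal_toSet_subset (hp0 : 0 ≤ p) (hp1 : p ≤ 1) (S : Finset (Fin n)) :
    (Measure.pi fun _ : Fin n => bernoulliBool p).real {f | toSet f ⊆ S} =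
      (1 - p) ^ (n - #S) := by
  have := isProbabilityMeasure_bernoulliBool hp0 hp1
  rw [setOf_toSet_subset, measureReal_pi_univ_pi_ite, probReal_univ,
    bernoulliBool_real_singleton hp0 hp1]
  simp

theorem measureReal_toSet_eq (hp0 : 0 ≤ p) (hp1 : p ≤ 1) (S : Finset (Fin n)) :
    (Measure.pi fun _ : Fin n => bernoulliBool p).real {f | toSet f = S} =
      p ^ #S * (1 - p) ^ (n - #S) := by
  rw [setOf_toSet_eq, measureReal_pi_univ_pi_ite, bernoulliBool_real_singleton hp0 hp1,
    bernoulliBool_real_singleton hp0 hp1]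
  simp

theorem measureReal_not_toSet_ssubset (hp0 : 0 ≤ p) (hp1 : p ≤ 1) (S : Finset (Fin n)) :
    (Measure.pi fun _ : Fin n => bernoulliBool p).real {f | ¬ toSet f ⊂ S} =
      1 - ((1 - p) ^ (n - #S) - p ^ #S * (1 - p) ^ (n - #S)) := by
  have := isProbabilityMeasure_bernoulliBool hp0 hp1
  have hset :
      {f : Fin n → Bool | ¬ toSet f ⊂ S} = ({f | toSet f ⊆ S} \ {f | toSet f = S})ᶜ := by
    ext f
    simp [ssubset_iff_subset_ne]
  have hsub : {f : Fin n → Bool | toSet f = S} ⊆ {f | toSet f ⊆ S} := fun f h => h.subset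
  rw [hset, probReal_compl_eq_one_sub .of_discrete, measureReal_sdiff hsub .of_discrete,
    measureReal_toSet_subset hp0 hp1, measureReal_toSet_eq hp0 hp1]

theorem measureReal_minimalEdge_le (hp0 : 0 ≤ p) (hp1 : p ≤ 1) (m : ℕ) (S : Finset (Fin n)) :
    (hyperMeasure n m p).real {ω | (∃ j, toSet (ω j) = S) ∧ ∀ k, ¬ toSet (ω k) ⊂ S} ≤
      (1 - (1 - p ^ #S * (1 - p) ^ (n - #S)) ^ m) *
        (1 - (1 - p) ^ (n - #S) * (1 - p ^ #S)) ^ (m - 1) := by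
  have := isProbabilityMeasure_bernoulliBool hp0 hp1
  set a := (1 - p) ^ (n - #S)
  set q := p ^ #S * a
  have hsdiff :
      {f : Fin n → Bool | ¬ toSet f ⊂ S} \ {f | toSet f = S} = {f | toSet f ⊆ S}ᶜ := by
    ext f
    by_cases h : toSet f = S <;> simp [ssubset_iff_subset_ne, h]
  have hsdiff_real : (Measure.pi fun _ : Fin n => bernoulliBool p).real
      ({f | ¬ toSet f ⊂ S} \ {f | toSet f = S}) = 1 - a := by
    rw [hsdiff, probReal_compl_eq_one_sub .of_discrete, measureReal_toSet_subset hp0 hp1]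
  have ha1 : a ≤ 1 := pow_le_one₀ (sub_nonneg.2 hp1) (by linarith)
  have hqa : q ≤ a := mul_le_of_le_one_left (by positivity) (pow_le_one₀ hp0 hp1)
  calc _ = (1 - (a - q)) ^ m - (1 - (a - q) - q) ^ m := by
        rw [hyperMeasure]
        refine (measureReal_pi_exists_mem_and_forall_mem (ι := Fin m)
          (Measure.pi fun _ : Fin n => bernoulliBool p) (A := {f | ¬ toSet f ⊂ S})
          (B := {f | toSet f = S}) .of_discrete .of_discrete).trans ?_
        rw [measureReal_not_toSet_ssubset hp0 hp1, hsdiff_real, Fintype.card_fin]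
        ring
    _ ≤ (1 - (1 - q) ^ m) * (1 - (a - q)) ^ (m - 1) :=
        pow_sub_sub_pow_le (by positivity) (by linarith) (by linarith) m
    _ = _ := by ring

end BernoulliVector

instance (n m : ℕ) (p : ℝ) : IsFiniteMeasure (hyperMeasure n m p) := by
  unfold hyperMeasure
  infer_instance

theorem expMin_upper_bound_general (p : ℝ) (hp0 : 0 < p) (hp1 : p < 1)
    (n m : ℕ) :
    expMin n m p ≤
      ∑ i ∈ Finset.range (n + 1),
        (n.choose i : ℝ) * (1 - (1 - p ^ i * (1 - p) ^ (n - i)) ^ m) *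
          (1 - (1 - p) ^ (n - i) * (1 - p ^ i)) ^ (m - 1) := by
  set g : ℕ → ℝ := fun i => (1 - (1 - p ^ i * (1 - p) ^ (n - i)) ^ m) *
    (1 - (1 - p) ^ (n - i) * (1 - p ^ i)) ^ (m - 1)
  calc expMin n m p = ∑ S : Finset (Fin n), (hyperMeasure n m p).real
        {ω | (∃ j, toSet (ω j) = S) ∧ ∀ k, ¬ toSet (ω k) ⊂ S} :=
        integral_card_filter _ _ fun _ => .of_discrete
    _ ≤ ∑ S : Finset (Fin n), g #S :=
        sum_le_sum fun S _ => measureReal_minimalEdge_le hp0.le hp1.le m S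
    _ = ∑ i ∈ range (n + 1), n.choose i * g i := by
        rw [← powerset_univ, sum_powerset_apply_card, card_univ, Fintype.card_fin]
        simp_rw [nsmul_eq_mul]
    _ = _ := by simp only [g, mul_assoc]

/-- **Upper bound on the expected size of the minimization.**
`E[|min(B_{n,m,p})|] ≤ Σ_{i=0}^n C(n,i)·(1-(1-p^i(1-p)^{n-i})^m)·(1-(1-p)^{n-i}(1-p^i))^{m-1}`. -/
theorem expMin_upper_bound (p : ℝ) (hp0 : 0 < p) (hp1 : p < 1)
    (n m : ℕ) (hn : 0 < n) (hm : 0 < m) :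
    expMin n m p ≤
      ∑ i ∈ Finset.range (n + 1),
        (n.choose i : ℝ) * (1 - (1 - p ^ i * (1 - p) ^ (n - i)) ^ m) *
          (1 - (1 - p) ^ (n - i) * (1 - p ^ i)) ^ (m - 1) :=
  expMin_upper_bound_general p hp0 hp1 n m
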